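/- arXiv:2409.10377 — 12 statements merged into one kernel-verified Lean document; each statement's English description precedes it below -/
import Mathlib

section
/- Let S : ℝ² → ℝ be a C² function, write S₁ = ∂S/∂b₁ and S₂ = ∂S/∂b₂, identify ℝ² with ℂ via b = b₁ + i·b₂, and define σ₁ : ℂ → ℂ² by σ₁(b) = (e^{S₁(b)+i·S₂(b)}, −e^{−S₁(b)+i·S₂(b)}·b). Then σ₁ is a Lagrangian section: H(σ₁(b)) = b for all b, and for every b ∈ ℂ and all tangent vectors β, β' ∈ ℝ², ω(Dσ₁(b)β, Dσ₁(b)β') = 0, where Dσ₁(b) denotes the real Fréchet derivative of σ₁ at b. -/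
/-- The standard focus-focus Hamiltonian `H(p,q) = -conj(p)·q`. -/
noncomputable def H : ℂ × ℂ → ℂ := fun x => -(starRingEnd ℂ) x.1 * x.2

/-- The standard symplectic form on `ℂ²`:
`ω((u,v),(u',v')) = Re(conj(u)·v' − conj(u')·v)`. -/
noncomputable def ω : ℂ × ℂ → ℂ × ℂ → ℝ := fun u v =>
  ((starRingEnd ℂ) u.1 * v.2 - (starRingEnd ℂ) v.1 * u.2).re

lemma conj_aux (x y : ℝ) :
    (starRingEnd ℂ) ((x : ℂ) + Complex.I * y) = (x : ℂ) - Complex.I * y := by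
  simp [map_add, map_mul, Complex.conj_ofReal, Complex.conj_I]
  ring

/-- Pure algebra: the symplectic form vanishes on the image of the derivative,
given the symmetry relation coming from Schwarz's theorem. -/
lemma omega_calc (z1 z2 p q p' q' : ℝ) (b β β' : ℂ)
    (hsym : p' * β.re + q' * β.im = p * β'.re + q * β'.im) :
    ω (Complex.exp ((z1 : ℂ) + Complex.I * z2) * ((p : ℂ) + Complex.I * q),
       Complex.exp (-(z1 : ℂ) + Complex.I * z2) * ((p : ℂ) - Complex.I * q) * b
         - Complex.exp (-(z1 : ℂ) + Complex.I * z2) * β)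
      (Complex.exp ((z1 : ℂ) + Complex.I * z2) * ((p' : ℂ) + Complex.I * q'),
       Complex.exp (-(z1 : ℂ) + Complex.I * z2) * ((p' : ℂ) - Complex.I * q') * b
         - Complex.exp (-(z1 : ℂ) + Complex.I * z2) * β') = 0 := by
  set E := Complex.exp ((z1 : ℂ) + Complex.I * z2) with hE
  set F := Complex.exp (-(z1 : ℂ) + Complex.I * z2) with hF
  have hEF : (starRingEnd ℂ) E * F = 1 := by
    rw [hE, hF, ← Complex.exp_conj, ← Complex.exp_add]
    rw [show (starRingEnd ℂ) ((z1 : ℂ) + Complex.I * z2) + (-(z1 : ℂ) + Complex.I * z2) = 0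
      by rw [conj_aux]; ring]
    exact Complex.exp_zero
  simp only [ω, map_mul, conj_aux]
  have key : (starRingEnd ℂ) E * ((p : ℂ) - Complex.I * q) *
        (F * ((p' : ℂ) - Complex.I * q') * b - F * β') -
      (starRingEnd ℂ) E * ((p' : ℂ) - Complex.I * q') *
        (F * ((p : ℂ) - Complex.I * q) * b - F * β)
      = ((p' : ℂ) - Complex.I * q') * β - ((p : ℂ) - Complex.I * q) * β' := by
    linear_combination (((p' : ℂ) - Complex.I * q') * β - ((p : ℂ) - Complex.I * q) * β') * hEF
  rw [key]
  simp only [Complex.sub_re, Complex.mul_re, Complex.sub_im, Complex.mul_im,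
    Complex.ofReal_re, Complex.ofReal_im, Complex.I_re, Complex.I_im]
  ring_nf
  nlinarith [hsym]

/-- Let `S : ℝ² ≅ ℂ → ℝ` be `C²`, with partial derivatives `S₁ = ∂S/∂b₁`
(the derivative in the direction `1`) and `S₂ = ∂S/∂b₂` (direction `i`), and let
`σ₁(b) = (e^{S₁(b)+i·S₂(b)}, −e^{−S₁(b)+i·S₂(b)}·b)`.  Then `σ₁` is a Lagrangian
section: `H(σ₁(b)) = b`, and `ω(Dσ₁(b)β, Dσ₁(b)β') = 0` for all tangent vectors. -/
theorem stmt_3 (S : ℂ → ℝ) (hS : ContDiff ℝ 2 S)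
    (S₁ S₂ : ℂ → ℝ)
    (hS₁ : ∀ b, S₁ b = fderiv ℝ S b 1)
    (hS₂ : ∀ b, S₂ b = fderiv ℝ S b Complex.I)
    (σ₁ : ℂ → ℂ × ℂ)
    (hσ : ∀ b, σ₁ b = (Complex.exp ((S₁ b : ℂ) + Complex.I * (S₂ b : ℂ)),
      -Complex.exp (-(S₁ b : ℂ) + Complex.I * (S₂ b : ℂ)) * b)) :
    ∀ b : ℂ, H (σ₁ b) = b ∧
      ∀ β β' : ℂ, ω (fderiv ℝ σ₁ b β) (fderiv ℝ σ₁ b β') = 0 := by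
  -- differentiability setup
  have hSd : Differentiable ℝ S := hS.differentiable (by norm_num)
  have hS' : ContDiff ℝ 1 (fderiv ℝ S) := hS.fderiv_right (by norm_num)
  intro b
  constructor
  · -- H (σ₁ b) = b
    rw [hσ]
    simp only [H]
    rw [← Complex.exp_conj, conj_aux]
    rw [show -Complex.exp ((S₁ b : ℂ) - Complex.I * (S₂ b : ℂ)) *
        (-Complex.exp (-(S₁ b : ℂ) + Complex.I * (S₂ b : ℂ)) * b)
        = Complex.exp ((S₁ b : ℂ) - Complex.I * (S₂ b : ℂ)) *
          Complex.exp (-(S₁ b : ℂ) + Complex.I * (S₂ b : ℂ)) * b by ring]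
    rw [← Complex.exp_add]
    rw [show ((S₁ b : ℂ) - Complex.I * (S₂ b : ℂ)) + (-(S₁ b : ℂ) + Complex.I * (S₂ b : ℂ)) = 0
      by ring]
    simp [Complex.exp_zero]
  · -- the Lagrangian condition
    set A := fderiv ℝ (fderiv ℝ S) b with hAdef
    have hA : HasFDerivAt (fderiv ℝ S) A b :=
      ((hS'.differentiable one_ne_zero) b).hasFDerivAt
    have hsymm : ∀ v w : ℂ, A v w = A w v :=
      second_derivative_symmetric (fun y => (hSd y).hasFDerivAt) hA
    -- derivatives of S₁ and S₂
    have h1 : HasFDerivAt S₁ (A.flip 1) b := by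
      have h := hA.clm_apply (hasFDerivAt_const (1 : ℂ) b)
      simp only [ContinuousLinearMap.comp_zero, zero_add] at h
      have : S₁ = fun y => fderiv ℝ S y 1 := funext hS₁
      rw [this]; exact h
    have h2 : HasFDerivAt S₂ (A.flip Complex.I) b := by
      have h := hA.clm_apply (hasFDerivAt_const (Complex.I) b)
      simp only [ContinuousLinearMap.comp_zero, zero_add] at h
      have : S₂ = fun y => fderiv ℝ S y Complex.I := funext hS₂
      rw [this]; exact h
    have h1C : HasFDerivAt (fun y => ((S₁ y : ℂ)))
        (Complex.ofRealCLM.comp (A.flip 1)) b :=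
      Complex.ofRealCLM.hasFDerivAt.comp b h1
    have h2C : HasFDerivAt (fun y => ((S₂ y : ℂ)))
        (Complex.ofRealCLM.comp (A.flip Complex.I)) b :=
      Complex.ofRealCLM.hasFDerivAt.comp b h2
    -- derivative of the first component
    have hf : HasFDerivAt (fun y => (S₁ y : ℂ) + Complex.I * (S₂ y : ℂ))
        (Complex.ofRealCLM.comp (A.flip 1)
          + Complex.I • Complex.ofRealCLM.comp (A.flip Complex.I)) b :=
      h1C.add (h2C.const_mul Complex.I)
    have hg : HasFDerivAt (fun y => -(S₁ y : ℂ) + Complex.I * (S₂ y : ℂ))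
        (-(Complex.ofRealCLM.comp (A.flip 1))
          + Complex.I • Complex.ofRealCLM.comp (A.flip Complex.I)) b :=
      h1C.neg.add (h2C.const_mul Complex.I)
    have hc1 := hf.cexp
    have hc2 := ((hg.cexp.neg).mul (hasFDerivAt_id b))
    have hσ' : HasFDerivAt σ₁
        ((Complex.exp ((S₁ b : ℂ) + Complex.I * (S₂ b : ℂ)) •
            (Complex.ofRealCLM.comp (A.flip 1)
              + Complex.I • Complex.ofRealCLM.comp (A.flip Complex.I))).prod
          ((-Complex.exp (-(S₁ b : ℂ) + Complex.I * (S₂ b : ℂ))) •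
              (ContinuousLinearMap.id ℝ ℂ)
            + b • -(Complex.exp (-(S₁ b : ℂ) + Complex.I * (S₂ b : ℂ)) •
              (-(Complex.ofRealCLM.comp (A.flip 1))
                + Complex.I • Complex.ofRealCLM.comp (A.flip Complex.I))))) b := by
      have : σ₁ = fun y => (Complex.exp ((S₁ y : ℂ) + Complex.I * (S₂ y : ℂ)),
          -Complex.exp (-(S₁ y : ℂ) + Complex.I * (S₂ y : ℂ)) * y) := funext hσ
      rw [this]
      exact HasFDerivAt.prodMk hc1 hc2
    have hfd := hσ'.fderiv
    -- evaluation of the derivative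
    have hev : ∀ β : ℂ, fderiv ℝ σ₁ b β =
        (Complex.exp ((S₁ b : ℂ) + Complex.I * (S₂ b : ℂ)) *
            ((A β 1 : ℂ) + Complex.I * (A β Complex.I : ℂ)),
         Complex.exp (-(S₁ b : ℂ) + Complex.I * (S₂ b : ℂ)) *
            ((A β 1 : ℂ) - Complex.I * (A β Complex.I : ℂ)) * b
          - Complex.exp (-(S₁ b : ℂ) + Complex.I * (S₂ b : ℂ)) * β) := by
      intro β
      rw [hfd]
      simp only [ContinuousLinearMap.prod_apply, ContinuousLinearMap.add_apply,
        ContinuousLinearMap.smul_apply, ContinuousLinearMap.comp_apply,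
        ContinuousLinearMap.neg_apply, ContinuousLinearMap.coe_id', id_eq,
        ContinuousLinearMap.flip_apply, Complex.ofRealCLM_apply, smul_eq_mul,
        Prod.mk.injEq]
      exact ⟨trivial, by ring⟩
    intro β β'
    rw [hev β, hev β']
    apply omega_calc
    -- the symmetry relation
    have expand : ∀ v w : ℂ, A v w = A v 1 * w.re + A v Complex.I * w.im := by
      intro v w
      have hw : w = w.re • (1 : ℂ) + w.im • Complex.I := by
        simp only [Complex.real_smul, mul_one, smul_eq_mul]
        exact (Complex.re_add_im w).symm
      calc A v w = A v (w.re • (1 : ℂ) + w.im • Complex.I) := by rw [← hw]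
        _ = A v 1 * w.re + A v Complex.I * w.im := by
            rw [map_add, map_smul, map_smul]; simp [smul_eq_mul]; ring
    rw [← expand β' β, ← expand β β']
    exact hsymm β' β
end

section
/- Fix real numbers s₁, s₂ and define σ₁(b) = (e^{s₁+i·s₂}, −e^{−s₁+i·s₂}·b) and σ₂(b) = (−conj(b), 1). Then for every b ∈ ℂ with b ≠ 0, the joint Hamiltonian flow for time t(b) = (s₁ − ln|b|, s₂ + arg(b) − π) carries σ₂(b) to σ₁(b): φ^{(s₁ − ln|b|, s₂ + arg(b) − π)}(σ₂(b)) = σ₁(b). (Here arg is the principal argument.) Moreover H(σ₁(b)) = b = H(σ₂(b)). -/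
/-- The joint Hamiltonian flow `φ^{(t₁,t₂)}(p,q) = (e^{t₁+it₂}·p, e^{−t₁+it₂}·q)`. -/
noncomputable def act (t : ℝ × ℝ) (x : ℂ × ℂ) : ℂ × ℂ :=
  (Complex.exp ((t.1 : ℂ) + Complex.I * (t.2 : ℂ)) * x.1,
   Complex.exp (-(t.1 : ℂ) + Complex.I * (t.2 : ℂ)) * x.2)

/-- The section `σ₁(b) = (e^{s₁+i·s₂}, −e^{−s₁+i·s₂}·b)`. -/
noncomputable def σ₁ (s₁ s₂ : ℝ) (b : ℂ) : ℂ × ℂ :=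
  (Complex.exp ((s₁ : ℂ) + Complex.I * (s₂ : ℂ)),
   -Complex.exp (-(s₁ : ℂ) + Complex.I * (s₂ : ℂ)) * b)

/-- The section `σ₂(b) = (−conj(b), 1)`. -/
noncomputable def σ₂ (b : ℂ) : ℂ × ℂ := (-(starRingEnd ℂ) b, 1)

/-- For `b ≠ 0`, the joint flow for time `t(b) = (s₁ − ln|b|, s₂ + arg(b) − π)`
carries `σ₂(b)` to `σ₁(b)`; moreover `H(σ₁(b)) = b = H(σ₂(b))`. -/
theorem stmt_4 (s₁ s₂ : ℝ) (b : ℂ) (hb : b ≠ 0) :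
    act (s₁ - Real.log ‖b‖, s₂ + Complex.arg b - Real.pi) (σ₂ b) = σ₁ s₁ s₂ b ∧
    H (σ₁ s₁ s₂ b) = b ∧ H (σ₂ b) = b := by
  have hA : (‖b‖ : ℂ) ≠ 0 := by
    exact_mod_cast (norm_ne_zero_iff.mpr hb)
  have hlog : Complex.exp ((Real.log ‖b‖ : ℂ)) = (‖b‖ : ℂ) := by
    rw [← Complex.ofReal_exp, Real.exp_log (norm_pos_iff.mpr hb)]
  have harg : Complex.exp (Complex.I * (Complex.arg b : ℂ)) = b / (‖b‖ : ℂ) := by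
    rw [mul_comm, eq_div_iff hA, mul_comm]
    exact Complex.norm_mul_exp_arg_mul_I b
  have hpi : Complex.exp (Complex.I * (Real.pi : ℂ)) = -1 := by
    rw [mul_comm]; exact Complex.exp_pi_mul_I
  have hconj : (starRingEnd ℂ) b = (‖b‖ : ℂ) ^ 2 / b := by
    rw [eq_div_iff hb, mul_comm, Complex.mul_conj]
    norm_cast
    exact (Complex.sq_norm b).symm
  refine ⟨?_, ?_, ?_⟩
  · unfold act σ₂ σ₁
    refine Prod.ext ?_ ?_
    · show Complex.exp _ * _ = _
      have h : ((s₁ - Real.log ‖b‖ : ℝ) : ℂ) +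
          Complex.I * ((s₂ + Complex.arg b - Real.pi : ℝ) : ℂ) =
          ((s₁ : ℂ) + Complex.I * (s₂ : ℂ)) + (-(Real.log ‖b‖ : ℂ)) +
          Complex.I * (Complex.arg b : ℂ) + Complex.I * (Real.pi : ℂ) - 2 * (Complex.I * (Real.pi : ℂ)) := by
        push_cast; ring
      rw [h, Complex.exp_sub, Complex.exp_add, Complex.exp_add, Complex.exp_add,
        Complex.exp_neg, hlog, harg, hpi, hconj]
      have h2 : Complex.exp (2 * (Complex.I * (Real.pi : ℂ))) = 1 := by
        have : 2 * (Complex.I * (Real.pi : ℂ)) = 2 * Real.pi * Complex.I := by ring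
        rw [this, Complex.exp_two_pi_mul_I]
      rw [h2]
      field_simp
    · show Complex.exp _ * _ = _
      have h : -((s₁ - Real.log ‖b‖ : ℝ) : ℂ) +
          Complex.I * ((s₂ + Complex.arg b - Real.pi : ℝ) : ℂ) =
          (-(s₁ : ℂ) + Complex.I * (s₂ : ℂ)) + ((Real.log ‖b‖ : ℂ)) +
          Complex.I * (Complex.arg b : ℂ) + Complex.I * (Real.pi : ℂ) - 2 * (Complex.I * (Real.pi : ℂ)) := by
        push_cast; ring
      rw [h, Complex.exp_sub, Complex.exp_add, Complex.exp_add, Complex.exp_add,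
        hlog, harg, hpi]
      have h2 : Complex.exp (2 * (Complex.I * (Real.pi : ℂ))) = 1 := by
        have : 2 * (Complex.I * (Real.pi : ℂ)) = 2 * Real.pi * Complex.I := by ring
        rw [this, Complex.exp_two_pi_mul_I]
      rw [h2]
      field_simp
  · unfold H σ₁
    simp only
    rw [← Complex.exp_conj]
    have h : (starRingEnd ℂ) ((s₁ : ℂ) + Complex.I * (s₂ : ℂ)) = (s₁ : ℂ) - Complex.I * (s₂ : ℂ) := by
      simp [Complex.conj_I]; ring
    rw [h]
    rw [show -Complex.exp ((s₁ : ℂ) - Complex.I * (s₂ : ℂ)) *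
        (-Complex.exp (-(s₁ : ℂ) + Complex.I * (s₂ : ℂ)) * b) =
        Complex.exp ((s₁ : ℂ) - Complex.I * (s₂ : ℂ)) *
        Complex.exp (-(s₁ : ℂ) + Complex.I * (s₂ : ℂ)) * b by ring,
      ← Complex.exp_add]
    simp [show ((s₁ : ℂ) - Complex.I * (s₂ : ℂ)) + (-(s₁ : ℂ) + Complex.I * (s₂ : ℂ)) = 0 by ring]
  · unfold H σ₂
    simp
end

section
/- Define Ψ : ℂ × ℝ² → ℂ² by Ψ(b, t₁, t₂) = (e^{t₁+i·t₂}, −e^{−t₁+i·t₂}·b) (the joint Hamiltonian flow for time (t₁,t₂) applied to the Lagrangian section σ₀(b) = (1, −b)). Then Ψ is smooth, H(Ψ(b,t₁,t₂)) = b for all (b,t₁,t₂), the real Fréchet derivative of Ψ is invertible at every point (so Ψ is a local diffeomorphism), and the range of Ψ is exactly {(p,q) ∈ ℂ² : p ≠ 0}. -/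
open Complex ContinuousLinearMap

/-- Liouville coordinates: `Ψ(b,t₁,t₂) = (e^{t₁+i·t₂}, −e^{−t₁+i·t₂}·b)`,
the joint Hamiltonian flow for time `(t₁,t₂)` applied to the section `σ₀(b) = (1,−b)`. -/
noncomputable def Ψ : ℂ × ℝ × ℝ → ℂ × ℂ := fun x =>
  (Complex.exp ((x.2.1 : ℂ) + Complex.I * (x.2.2 : ℂ)),
   -Complex.exp (-(x.2.1 : ℂ) + Complex.I * (x.2.2 : ℂ)) * x.1)

/-- the real-linear map `(b,t₁,t₂) ↦ t₁ + I t₂` -/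
noncomputable def gL : (ℂ × ℝ × ℝ) →L[ℝ] ℂ :=
  Complex.ofRealCLM.comp ((ContinuousLinearMap.fst ℝ ℝ ℝ).comp (ContinuousLinearMap.snd ℝ ℂ (ℝ × ℝ)))
  + Complex.I • (Complex.ofRealCLM.comp ((ContinuousLinearMap.snd ℝ ℝ ℝ).comp (ContinuousLinearMap.snd ℝ ℂ (ℝ × ℝ))))

/-- the real-linear map `(b,t₁,t₂) ↦ -t₁ + I t₂` -/
noncomputable def gL2 : (ℂ × ℝ × ℝ) →L[ℝ] ℂ :=
  -(Complex.ofRealCLM.comp ((ContinuousLinearMap.fst ℝ ℝ ℝ).comp (ContinuousLinearMap.snd ℝ ℂ (ℝ × ℝ))))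
  + Complex.I • (Complex.ofRealCLM.comp ((ContinuousLinearMap.snd ℝ ℝ ℝ).comp (ContinuousLinearMap.snd ℝ ℂ (ℝ × ℝ))))

@[simp] lemma gL_apply (v : ℂ × ℝ × ℝ) : gL v = (v.2.1 : ℂ) + Complex.I * (v.2.2 : ℂ) := by
  simp [gL, smul_eq_mul]

@[simp] lemma gL2_apply (v : ℂ × ℝ × ℝ) : gL2 v = -(v.2.1 : ℂ) + Complex.I * (v.2.2 : ℂ) := by
  simp [gL2, smul_eq_mul]

lemma smooth_Psi : ContDiff ℝ (⊤ : ℕ∞) Ψ := by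
  have hexp : ContDiff ℝ (⊤ : ℕ∞) Complex.exp := Complex.contDiff_exp
  refine ContDiff.prodMk ?_ ?_
  · have := hexp.comp gL.contDiff
    simpa [Function.comp_def] using this
  · have := ((hexp.comp gL2.contDiff).neg.mul contDiff_fst)
    simpa [Function.comp_def] using this

lemma hasFDerivAt_exp_comp (L : (ℂ × ℝ × ℝ) →L[ℝ] ℂ) (x : ℂ × ℝ × ℝ) :
    HasFDerivAt (fun y => Complex.exp (L y)) (Complex.exp (L x) • L) x := by
  have h := ((Complex.hasDerivAt_exp (L x)).hasFDerivAt.restrictScalars ℝ).comp x L.hasFDerivAt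
  have heq : ((ContinuousLinearMap.restrictScalars ℝ
      ((1 : ℂ →L[ℂ] ℂ).smulRight (Complex.exp (L x)))).comp L) = Complex.exp (L x) • L := by
    refine ContinuousLinearMap.ext fun v => ?_
    simp [smul_eq_mul, mul_comm]
  exact heq ▸ h

/-- explicit derivative of `Ψ` -/
noncomputable def D (x : ℂ × ℝ × ℝ) : (ℂ × ℝ × ℝ) →L[ℝ] ℂ × ℂ :=
  (Complex.exp (gL x) • gL).prod
    ((-Complex.exp (gL2 x)) • (ContinuousLinearMap.fst ℝ ℂ (ℝ × ℝ))
      + (-(Complex.exp (gL2 x) • gL2)).smulRight x.1)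

lemma hasFDerivAt_Psi (x : ℂ × ℝ × ℝ) : HasFDerivAt Ψ (D x) x := by
  have hfun : Ψ = fun y => (Complex.exp (gL y), (-Complex.exp (gL2 y)) * y.1) := by
    funext y; simp [Ψ]
  have h1 := hasFDerivAt_exp_comp gL x
  have hu : HasFDerivAt (fun y => -Complex.exp (gL2 y)) (-(Complex.exp (gL2 x) • gL2)) x :=
    (hasFDerivAt_exp_comp gL2 x).neg
  have hfst : HasFDerivAt (fun y : ℂ × ℝ × ℝ => y.1) (ContinuousLinearMap.fst ℝ ℂ (ℝ × ℝ)) x :=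
    (ContinuousLinearMap.fst ℝ ℂ (ℝ × ℝ)).hasFDerivAt
  have h2 := hu.mul' hfst
  rw [hfun]
  exact HasFDerivAt.prodMk h1 h2

lemma D_apply (x v : ℂ × ℝ × ℝ) :
    D x v = (Complex.exp (gL x) * gL v,
      -Complex.exp (gL2 x) * v.1 + -(Complex.exp (gL2 x) * gL2 v) * x.1) := by
  simp only [D, ContinuousLinearMap.prod_apply, ContinuousLinearMap.add_apply,
    ContinuousLinearMap.smul_apply, ContinuousLinearMap.neg_apply,
    ContinuousLinearMap.smulRight_apply, ContinuousLinearMap.coe_fst', smul_eq_mul]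

lemma D_injective (x : ℂ × ℝ × ℝ) : Function.Injective (D x) := by
  rw [injective_iff_map_eq_zero]
  intro v hv
  rw [D_apply, Prod.ext_iff] at hv
  simp only [Prod.fst_zero, Prod.snd_zero] at hv
  obtain ⟨h1, h2⟩ := hv
  have hg : (v.2.1 : ℂ) + Complex.I * (v.2.2 : ℂ) = 0 := by
    have := mul_eq_zero.mp h1
    simpa [Complex.exp_ne_zero] using this
  have ha : v.2.1 = 0 := by have := congrArg Complex.re hg; simpa using this
  have hb : v.2.2 = 0 := by have := congrArg Complex.im hg; simpa using this
  have hv1 : v.1 = 0 := by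
    simp only [gL2_apply, ha, hb, Complex.ofReal_zero, neg_zero, mul_zero, add_zero,
      zero_add, neg_mul, mul_zero, neg_zero, zero_mul] at h2
    simpa [Complex.exp_ne_zero] using h2
  exact Prod.ext hv1 (Prod.ext ha hb)

/-- `Ψ` is smooth, `H ∘ Ψ` is the projection to `b`, the real Fréchet derivative
of `Ψ` is invertible (bijective) at every point, and the range of `Ψ` is exactly
`{(p,q) : p ≠ 0}`. -/
theorem stmt_5 :
    ContDiff ℝ (⊤ : ℕ∞) Ψ ∧
    (∀ x : ℂ × ℝ × ℝ, H (Ψ x) = x.1) ∧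
    (∀ x : ℂ × ℝ × ℝ, Function.Bijective (fderiv ℝ Ψ x)) ∧
    Set.range Ψ = {pq : ℂ × ℂ | pq.1 ≠ 0} := by
  refine ⟨smooth_Psi, ?_, ?_, ?_⟩
  · intro x
    simp only [H, Ψ, ← Complex.exp_conj, map_add, map_mul, Complex.conj_ofReal, Complex.conj_I]
    rw [← mul_assoc, neg_mul_neg, ← Complex.exp_add]
    ring_nf
    simp
  · intro x
    rw [(hasFDerivAt_Psi x).fderiv]
    have hinj := D_injective x
    refine ⟨hinj, ?_⟩
    have hdim : Module.finrank ℝ (ℂ × ℝ × ℝ) = Module.finrank ℝ (ℂ × ℂ) := by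
      simp [Module.finrank_prod, Complex.finrank_real_complex]
    exact (LinearMap.injective_iff_surjective_of_finrank_eq_finrank
      (f := ((D x) : (ℂ × ℝ × ℝ) →ₗ[ℝ] ℂ × ℂ)) hdim).mp hinj
  · ext pq
    simp only [Set.mem_range, Set.mem_setOf_eq]
    constructor
    · rintro ⟨x, rfl⟩
      simp [Ψ, Complex.exp_ne_zero]
    · intro hp
      refine ⟨(-pq.2 * Complex.exp (((Complex.log pq.1).re : ℂ) - Complex.I * ((Complex.log pq.1).im : ℂ)),
        (Complex.log pq.1).re, (Complex.log pq.1).im), ?_⟩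
      have hlog : ((Complex.log pq.1).re : ℂ) + Complex.I * ((Complex.log pq.1).im : ℂ) = Complex.log pq.1 := by
        rw [mul_comm]; exact Complex.re_add_im _
      refine Prod.ext ?_ ?_
      · simp only [Ψ]
        rw [hlog, Complex.exp_log hp]
      · simp only [Ψ]
        rw [← mul_assoc, neg_mul_neg, mul_right_comm, ← Complex.exp_add]
        ring_nf
        simp
end

section
/- Define Ψ : ℂ × ℝ² → ℂ² by Ψ(b, t₁, t₂) = (e^{t₁+i·t₂}, −e^{−t₁+i·t₂}·b). Then Ψ pulls the standard symplectic form back to the canonical form Σᵢ dbᵢ ∧ dtᵢ: for every point (b,t₁,t₂) and all tangent vectors (β,τ₁,τ₂), (β',τ₁',τ₂') ∈ ℂ × ℝ² (with β = β₁+iβ₂, β' = β₁'+iβ₂'), one has ω(DΨ(b,t)(β,τ₁,τ₂), DΨ(b,t)(β',τ₁',τ₂')) = β₁τ₁' − β₁'τ₁ + β₂τ₂' − β₂'τ₂, where DΨ denotes the real Fréchet derivative. -/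
open Complex ContinuousLinearMap in
/-- The ℝ-linear map `(β,τ₁,τ₂) ↦ τ₁ + i·τ₂`. -/
noncomputable def T1 : ℂ × ℝ × ℝ →L[ℝ] ℂ :=
  Complex.ofRealCLM.comp ((fst ℝ ℝ ℝ).comp (snd ℝ ℂ (ℝ × ℝ))) +
    Complex.I • Complex.ofRealCLM.comp ((snd ℝ ℝ ℝ).comp (snd ℝ ℂ (ℝ × ℝ)))

open Complex ContinuousLinearMap in
/-- The ℝ-linear map `(β,τ₁,τ₂) ↦ −τ₁ + i·τ₂`. -/
noncomputable def T2 : ℂ × ℝ × ℝ →L[ℝ] ℂ :=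
  -Complex.ofRealCLM.comp ((fst ℝ ℝ ℝ).comp (snd ℝ ℂ (ℝ × ℝ))) +
    Complex.I • Complex.ofRealCLM.comp ((snd ℝ ℝ ℝ).comp (snd ℝ ℂ (ℝ × ℝ)))

lemma T1_apply (x : ℂ × ℝ × ℝ) : T1 x = (x.2.1 : ℂ) + Complex.I * x.2.2 := by
  simp [T1, smul_eq_mul]

lemma T2_apply (x : ℂ × ℝ × ℝ) : T2 x = -(x.2.1 : ℂ) + Complex.I * x.2.2 := by
  simp [T2, smul_eq_mul]

open Complex ContinuousLinearMap in
/-- The explicit real Fréchet derivative of `Ψ`. -/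
lemma hasFDerivAt_Ψ (x : ℂ × ℝ × ℝ) :
    HasFDerivAt Ψ
      ((Complex.exp ((x.2.1 : ℂ) + Complex.I * x.2.2) • T1).prod
        ((-Complex.exp (-(x.2.1 : ℂ) + Complex.I * x.2.2)) • fst ℝ ℂ (ℝ × ℝ) +
          x.1 • (-(Complex.exp (-(x.2.1 : ℂ) + Complex.I * x.2.2) • T2)))) x := by
  have h1 : HasFDerivAt (fun y : ℂ × ℝ × ℝ => (y.2.1 : ℂ) + Complex.I * y.2.2) T1 x := by
    have := T1.hasFDerivAt (x := x)
    apply this.congr_of_eventuallyEq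
    filter_upwards with y
    exact (T1_apply y).symm
  have h2 : HasFDerivAt (fun y : ℂ × ℝ × ℝ => -(y.2.1 : ℂ) + Complex.I * y.2.2) T2 x := by
    have := T2.hasFDerivAt (x := x)
    apply this.congr_of_eventuallyEq
    filter_upwards with y
    exact (T2_apply y).symm
  exact HasFDerivAt.prodMk (HasFDerivAt.cexp h1) (HasFDerivAt.mul (HasFDerivAt.neg (HasFDerivAt.cexp h2)) (hasFDerivAt_fst (p := x) (𝕜 := ℝ)))

/-- `Ψ` pulls the standard symplectic form back to `Σᵢ dbᵢ ∧ dtᵢ`: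
`ω(DΨ(b,t)(β,τ₁,τ₂), DΨ(b,t)(β',τ₁',τ₂')) = β₁τ₁' − β₁'τ₁ + β₂τ₂' − β₂'τ₂`. -/
theorem stmt_6 :
    ∀ (x u v : ℂ × ℝ × ℝ),
      ω (fderiv ℝ Ψ x u) (fderiv ℝ Ψ x v) =
        u.1.re * v.2.1 - v.1.re * u.2.1 + u.1.im * v.2.2 - v.1.im * u.2.2 := by
  intro x u v
  rw [(hasFDerivAt_Ψ x).fderiv]
  obtain ⟨b, t₁, t₂⟩ := x
  obtain ⟨β, s₁, s₂⟩ := u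
  obtain ⟨γ, r₁, r₂⟩ := v
  set E := Complex.exp ((t₁ : ℂ) + Complex.I * t₂) with hE
  set F := Complex.exp (-(t₁ : ℂ) + Complex.I * t₂) with hF
  have key : (starRingEnd ℂ) E * F = 1 := by
    rw [hE, hF, ← Complex.exp_conj, ← Complex.exp_add]
    rw [show (starRingEnd ℂ) ((t₁ : ℂ) + Complex.I * t₂) + (-(t₁ : ℂ) + Complex.I * t₂) = 0 by
      simp [map_add, map_mul, Complex.conj_I, Complex.conj_ofReal]; ring]
    exact Complex.exp_zero
  simp only [ω, ContinuousLinearMap.prod_apply, ContinuousLinearMap.smul_apply,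
    ContinuousLinearMap.add_apply, ContinuousLinearMap.neg_apply, ContinuousLinearMap.coe_fst',
    T1_apply, T2_apply, smul_eq_mul]
  have expand :
      (starRingEnd ℂ) (E * ((s₁ : ℂ) + Complex.I * s₂)) *
          (-F * γ + b * -(F * (-(r₁ : ℂ) + Complex.I * r₂))) -
        (starRingEnd ℂ) (E * ((r₁ : ℂ) + Complex.I * r₂)) *
          (-F * β + b * -(F * (-(s₁ : ℂ) + Complex.I * s₂))) =
      -((s₁ : ℂ) - Complex.I * s₂) * γ + ((r₁ : ℂ) - Complex.I * r₂) * β := by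
    simp only [map_mul, map_add, map_neg, Complex.conj_ofReal, Complex.conj_I]
    linear_combination
      (((s₁ : ℂ) - Complex.I * s₂) * (-γ - b * (-(r₁ : ℂ) + Complex.I * r₂)) -
        ((r₁ : ℂ) - Complex.I * r₂) * (-β - b * (-(s₁ : ℂ) + Complex.I * s₂))) * key
  rw [expand]
  simp [Complex.add_re, Complex.mul_re, Complex.sub_re]
  ring
end

section
/- Fix real numbers s₁, s₂ and b ∈ ℂ with b ≠ 0. The additions +₁ and +₂ on the fiber F_b are both commutative: for all x = (p₁,q₁), y = (p₂,q₂) ∈ F_b, x +₁ y = y +₁ x and x +₂ y = y +₂ x. Moreover +₁ is associative: (x +₁ y) +₁ z = x +₁ (y +₁ z) for all x,y,z ∈ F_b, and the results of these additions again lie in F_b. -/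
/-- The fiber `F_b = {(p,q) ∈ ℂ² : −conj(p)·q = b}`. -/
def Fb (b : ℂ) : Set (ℂ × ℂ) := {x | -(starRingEnd ℂ) x.1 * x.2 = b}

/-- Addition with respect to the Lagrangian section `σ₁`:
`(p₁,q₁) +₁ (p₂,q₂) = (e^{−s₁−is₂}·p₁p₂, e^{s₁−is₂}·q₁/conj(p₂))`. -/
noncomputable def add1 (s₁ s₂ : ℝ) (x y : ℂ × ℂ) : ℂ × ℂ :=
  (Complex.exp (-(s₁ : ℂ) - Complex.I * (s₂ : ℂ)) * x.1 * y.1,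
   Complex.exp ((s₁ : ℂ) - Complex.I * (s₂ : ℂ)) * x.2 / (starRingEnd ℂ) y.1)

/-- Addition with respect to the section `σ₂`:
`(p₁,q₁) +₂ (p₂,q₂) = (p₁/conj(q₂), q₁q₂)`. -/
noncomputable def add2 (x y : ℂ × ℂ) : ℂ × ℂ :=
  (x.1 / (starRingEnd ℂ) y.2, x.2 * y.2)

lemma fb_ne (b : ℂ) (hb : b ≠ 0) {x : ℂ × ℂ} (hx : x ∈ Fb b) :
    x.1 ≠ 0 ∧ x.2 ≠ 0 := by
  simp only [Fb, Set.mem_setOf_eq] at hx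
  constructor
  · rintro h; rw [h] at hx; simp at hx; exact hb hx.symm
  · rintro h; rw [h] at hx; simp at hx; exact hb hx.symm

/-- On a regular fiber `F_b` (`b ≠ 0`), both additions are commutative, their
results again lie in `F_b`, and `+₁` is associative. -/
theorem stmt_7 (s₁ s₂ : ℝ) (b : ℂ) (hb : b ≠ 0) :
    (∀ x ∈ Fb b, ∀ y ∈ Fb b,
      add1 s₁ s₂ x y = add1 s₁ s₂ y x ∧ add2 x y = add2 y x ∧
      add1 s₁ s₂ x y ∈ Fb b ∧ add2 x y ∈ Fb b) ∧
    (∀ x ∈ Fb b, ∀ y ∈ Fb b, ∀ z ∈ Fb b,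
      add1 s₁ s₂ (add1 s₁ s₂ x y) z = add1 s₁ s₂ x (add1 s₁ s₂ y z)) := by
  constructor
  · intro x hx y hy
    obtain ⟨hp1, hq1⟩ := fb_ne b hb hx
    obtain ⟨hp2, hq2⟩ := fb_ne b hb hy
    have hcp1 : (starRingEnd ℂ) x.1 ≠ 0 := by simpa using hp1
    have hcp2 : (starRingEnd ℂ) y.1 ≠ 0 := by simpa using hp2
    have hcq1 : (starRingEnd ℂ) x.2 ≠ 0 := by simpa using hq1
    have hcq2 : (starRingEnd ℂ) y.2 ≠ 0 := by simpa using hq2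
    have hx' : -(starRingEnd ℂ) x.1 * x.2 = b := hx
    have hy' : -(starRingEnd ℂ) y.1 * y.2 = b := hy
    refine ⟨?_, ?_, ?_, ?_⟩
    · simp only [add1, Prod.mk.injEq]
      constructor
      · ring
      · field_simp
        have : x.2 * ((starRingEnd ℂ) x.1) = y.2 * ((starRingEnd ℂ) y.1) := by
          have := hx'.trans hy'.symm
          linear_combination -this
        linear_combination this
    · simp only [add2, Prod.mk.injEq]
      constructor
      · have hx'' : -x.1 * (starRingEnd ℂ) x.2 = (starRingEnd ℂ) b := by
          rw [← hx']; simp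
        have hy'' : -y.1 * (starRingEnd ℂ) y.2 = (starRingEnd ℂ) b := by
          rw [← hy']; simp
        field_simp
        have : x.1 * ((starRingEnd ℂ) x.2) = y.1 * ((starRingEnd ℂ) y.2) := by
          have := hx''.trans hy''.symm
          linear_combination -this
        linear_combination this
      · ring
    · show -(starRingEnd ℂ) _ * _ = b
      simp only [add1, map_mul, ← Complex.exp_conj, map_sub, map_neg, map_mul,
        Complex.conj_I, Complex.conj_ofReal]
      rw [← hx']
      field_simp
      have h1 : Complex.exp (-(s₁:ℂ) + Complex.I * s₂) *
          Complex.exp ((s₁:ℂ) - Complex.I * s₂) = 1 := by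
        rw [← Complex.exp_add]; ring_nf; exact Complex.exp_zero
      rw [sub_neg_eq_add]; linear_combination -h1
    · show -(starRingEnd ℂ) _ * _ = b
      simp only [add2, map_div₀, Complex.conj_conj]
      rw [← hx']
      field_simp
  · intro x hx y hy z hz
    obtain ⟨hp1, _⟩ := fb_ne b hb hx
    obtain ⟨hp2, _⟩ := fb_ne b hb hy
    obtain ⟨hp3, _⟩ := fb_ne b hb hz
    have hcp2 : (starRingEnd ℂ) y.1 ≠ 0 := by simpa using hp2
    have hcp3 : (starRingEnd ℂ) z.1 ≠ 0 := by simpa using hp3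
    have hE : Complex.exp (-(s₁ : ℂ) - Complex.I * s₂) ≠ 0 := Complex.exp_ne_zero _
    simp only [add1, Prod.mk.injEq, map_mul, ← Complex.exp_conj, map_sub, map_neg,
      Complex.conj_I, Complex.conj_ofReal]
    constructor
    · ring
    · have hce : (starRingEnd ℂ) (Complex.exp (-(s₁:ℂ) - Complex.I * s₂)) ≠ 0 := by
        simp [hE]
      field_simp
      have h1 : Complex.exp (-(s₁:ℂ) + Complex.I * s₂) *
          Complex.exp ((s₁:ℂ) - Complex.I * s₂) = 1 := by
        rw [← Complex.exp_add]; ring_nf; exact Complex.exp_zero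
      rw [sub_neg_eq_add]; linear_combination h1
end

section
/- Fix real numbers s₁, s₂ and b ∈ ℂ with b ≠ 0, and let x = (p₁,q₁), y = (p₂,q₂) ∈ 𝔇_b. Then the following are equivalent: (i) x +₁ y ∈ 𝔇_b; (ii) |e^{−s₁−is₂}·p₁p₂| > |b|; (iii) |q₁q₂| < e^{−s₁}·|b|. -/
/-- The formal domain on the fiber: `𝔇_b = {(p,q) ∈ F_b : |q| < 1, |p| ≤ e^{s₁}}`. -/
noncomputable def Db (s₁ : ℝ) (b : ℂ) : Set (ℂ × ℂ) :=
  {x ∈ Fb b | ‖x.2‖ < 1 ∧ ‖x.1‖ ≤ Real.exp s₁}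

/-- For `x = (p₁,q₁), y = (p₂,q₂) ∈ 𝔇_b`, the following are equivalent:
(i) `x +₁ y ∈ 𝔇_b`; (ii) `|e^{−s₁−is₂}·p₁p₂| > |b|`; (iii) `|q₁q₂| < e^{−s₁}·|b|`. -/
theorem stmt_9 (s₁ s₂ : ℝ) (b : ℂ) (hb : b ≠ 0)
    (x y : ℂ × ℂ) (hx : x ∈ Db s₁ b) (hy : y ∈ Db s₁ b) :
    (add1 s₁ s₂ x y ∈ Db s₁ b ↔
      ‖Complex.exp (-(s₁ : ℂ) - Complex.I * (s₂ : ℂ)) * x.1 * y.1‖ >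
        ‖b‖) ∧
    (add1 s₁ s₂ x y ∈ Db s₁ b ↔
      ‖x.2 * y.2‖ < Real.exp (-s₁) * ‖b‖) := by
  obtain ⟨hfx, hq1, hp1⟩ := hx
  obtain ⟨hfy, hq2, hp2⟩ := hy
  have hfx' : -(starRingEnd ℂ) x.1 * x.2 = b := hfx
  have hfy' : -(starRingEnd ℂ) y.1 * y.2 = b := hfy
  have hp1ne : x.1 ≠ 0 := by
    intro h; apply hb; rw [← hfx', h]; simp
  have hq1ne : x.2 ≠ 0 := by
    intro h; apply hb; rw [← hfx', h]; simp
  have hp2ne : y.1 ≠ 0 := by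
    intro h; apply hb; rw [← hfy', h]; simp
  have hq2ne : y.2 ≠ 0 := by
    intro h; apply hb; rw [← hfy', h]; simp
  have hcy : (starRingEnd ℂ) y.1 ≠ 0 := by simpa using hp2ne
  have habx : ‖x.1‖ * ‖x.2‖ = ‖b‖ := by
    rw [← hfx']; simp
  have haby : ‖y.1‖ * ‖y.2‖ = ‖b‖ := by
    rw [← hfy']; simp
  have hconjA : (starRingEnd ℂ) (-(s₁:ℂ) - Complex.I * s₂) = -(s₁:ℂ) + Complex.I * s₂ := by
    simp [map_sub, map_mul, Complex.conj_I, Complex.conj_ofReal]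
  have hAB : Complex.exp (-(s₁:ℂ) + Complex.I * s₂) * Complex.exp ((s₁:ℂ) - Complex.I * s₂)
      = 1 := by
    rw [← Complex.exp_add]
    have : (-(s₁:ℂ) + Complex.I * s₂) + ((s₁:ℂ) - Complex.I * s₂) = 0 := by ring
    rw [this, Complex.exp_zero]
  have hfib : add1 s₁ s₂ x y ∈ Fb b := by
    show -(starRingEnd ℂ) (add1 s₁ s₂ x y).1 * (add1 s₁ s₂ x y).2 = b
    simp only [add1, map_mul, ← Complex.exp_conj, hconjA]
    calc -(Complex.exp (-(s₁:ℂ) + Complex.I * s₂) * (starRingEnd ℂ) x.1 *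
            (starRingEnd ℂ) y.1) *
          (Complex.exp ((s₁:ℂ) - Complex.I * s₂) * x.2 / (starRingEnd ℂ) y.1)
        = (Complex.exp (-(s₁:ℂ) + Complex.I * s₂) * Complex.exp ((s₁:ℂ) - Complex.I * s₂)) *
            (-(starRingEnd ℂ) x.1 * x.2) * ((starRingEnd ℂ) y.1 / (starRingEnd ℂ) y.1) := by
          ring
      _ = b := by rw [hAB, div_self hcy, hfx']; ring
  have hAre : (-(s₁:ℂ) - Complex.I * s₂).re = -s₁ := by simp
  have hBre : ((s₁:ℂ) - Complex.I * s₂).re = s₁ := by simp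
  have habsp : ‖(add1 s₁ s₂ x y).1‖ =
      Real.exp (-s₁) * (‖x.1‖ * ‖y.1‖) := by
    simp [add1, map_mul, Complex.norm_exp, hAre, mul_assoc]
  have habsq : ‖(add1 s₁ s₂ x y).2‖ =
      Real.exp s₁ * ‖x.2‖ / ‖y.1‖ := by
    simp [add1, map_mul, map_div₀, Complex.norm_exp, hBre]
  have hy1pos : 0 < ‖y.1‖ := norm_pos_iff.mpr hp2ne
  have hx1pos : 0 < ‖x.1‖ := norm_pos_iff.mpr hp1ne
  have hx2pos : 0 < ‖x.2‖ := norm_pos_iff.mpr hq1ne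
  have hy2pos : 0 < ‖y.2‖ := norm_pos_iff.mpr hq2ne
  have hes : (0:ℝ) < Real.exp s₁ := Real.exp_pos _
  have hens : (0:ℝ) < Real.exp (-s₁) := Real.exp_pos _
  have hee : Real.exp (-s₁) * Real.exp s₁ = 1 := by
    rw [← Real.exp_add]; simp
  have hmem : add1 s₁ s₂ x y ∈ Db s₁ b ↔
      Real.exp s₁ * ‖x.2‖ < ‖y.1‖ := by
    constructor
    · rintro ⟨-, h1, -⟩
      rw [habsq, div_lt_one hy1pos] at h1
      exact h1
    · intro h
      refine ⟨hfib, ?_, ?_⟩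
      · rw [habsq, div_lt_one hy1pos]; exact h
      · rw [habsp]
        have h1 : ‖x.1‖ * ‖y.1‖ ≤ Real.exp s₁ * Real.exp s₁ :=
          mul_le_mul hp1 hp2 hy1pos.le hes.le
        calc Real.exp (-s₁) * (‖x.1‖ * ‖y.1‖)
            ≤ Real.exp (-s₁) * (Real.exp s₁ * Real.exp s₁) := by
              exact mul_le_mul_of_nonneg_left h1 hens.le
          _ = Real.exp s₁ := by rw [← mul_assoc, hee, one_mul]
  constructor
  · rw [hmem, gt_iff_lt, norm_mul, norm_mul, Complex.norm_exp, hAre, ← habx,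
      Real.exp_neg, mul_assoc, inv_mul_eq_div, lt_div_iff₀ hes,
      show ‖x.1‖ * ‖x.2‖ * Real.exp s₁
          = ‖x.1‖ * (Real.exp s₁ * ‖x.2‖) from by ring,
      mul_lt_mul_iff_right₀ hx1pos]
  · rw [hmem, norm_mul, ← haby,
      Real.exp_neg, inv_mul_eq_div, lt_div_iff₀ hes,
      show ‖x.2‖ * ‖y.2‖ * Real.exp s₁
          = (Real.exp s₁ * ‖x.2‖) * ‖y.2‖ from by ring,
      mul_lt_mul_iff_left₀ hy2pos]
end

section
/- Fix real numbers s₁, s₂ and b ∈ ℂ with b ≠ 0, and let x = (p₁,q₁), y = (p₂,q₂) ∈ 𝔇_b. Then x +₂ y ∈ 𝔇_b if and only if |q₁q₂| ≥ e^{−s₁}·|b|. Consequently, exactly one of the two points x +₁ y and x +₂ y lies in the formal domain 𝔇_b. -/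
/-- For `x, y ∈ 𝔇_b`: `x +₂ y ∈ 𝔇_b ↔ |q₁q₂| ≥ e^{−s₁}·|b|`; consequently,
exactly one of `x +₁ y` and `x +₂ y` lies in `𝔇_b`. -/
theorem stmt_10 (s₁ s₂ : ℝ) (b : ℂ) (hb : b ≠ 0)
    (x y : ℂ × ℂ) (hx : x ∈ Db s₁ b) (hy : y ∈ Db s₁ b) :
    (add2 x y ∈ Db s₁ b ↔ Real.exp (-s₁) * ‖b‖ ≤ ‖x.2 * y.2‖) ∧
    Xor' (add1 s₁ s₂ x y ∈ Db s₁ b) (add2 x y ∈ Db s₁ b) := by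
  obtain ⟨hfx, hxq, hxp⟩ := hx
  obtain ⟨hfy, hyq, hyp⟩ := hy
  have hE : (0:ℝ) < Real.exp s₁ := Real.exp_pos _
  have hxq0 : x.2 ≠ 0 := by rintro h; apply hb; rw [← hfx, h, mul_zero]
  have hx10 : x.1 ≠ 0 := by rintro h; apply hb; rw [← hfx, h]; simp
  have hyq0 : y.2 ≠ 0 := by rintro h; apply hb; rw [← hfy, h, mul_zero]
  have hy10 : y.1 ≠ 0 := by rintro h; apply hb; rw [← hfy, h]; simp
  have hcy10 : (starRingEnd ℂ) y.1 ≠ 0 := by simpa using hy10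
  have habx : ‖x.1‖ * ‖x.2‖ = ‖b‖ := by
    rw [← hfx]; simp [map_mul]
  have haby : ‖y.1‖ * ‖y.2‖ = ‖b‖ := by
    rw [← hfy]; simp [map_mul]
  have hbpos : 0 < ‖b‖ := norm_pos_iff.mpr hb
  have aq1 : 0 < ‖x.2‖ := norm_pos_iff.mpr hxq0
  have aq2 : 0 < ‖y.2‖ := norm_pos_iff.mpr hyq0
  have ap2 : 0 < ‖y.1‖ := norm_pos_iff.mpr hy10
  have hEneg : Real.exp (-s₁) = (Real.exp s₁)⁻¹ := Real.exp_neg s₁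
  have key : add2 x y ∈ Db s₁ b ↔ Real.exp (-s₁) * ‖b‖ ≤ ‖x.2 * y.2‖ := by
    constructor
    · rintro ⟨-, -, h3⟩
      simp only [add2, norm_div, norm_mul, Complex.norm_conj] at h3 ⊢
      rw [div_le_iff₀ aq2] at h3
      rw [hEneg, inv_mul_le_iff₀ hE]
      nlinarith
    · intro h
      rw [norm_mul, hEneg, inv_mul_le_iff₀ hE] at h
      refine ⟨?_, ?_, ?_⟩
      · show -(starRingEnd ℂ) (x.1 / (starRingEnd ℂ) y.2) * (x.2 * y.2) = b
        rw [map_div₀, Complex.conj_conj, ← hfx]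
        field_simp
      · show ‖x.2 * y.2‖ < 1
        rw [norm_mul]
        nlinarith
      · show ‖x.1 / (starRingEnd ℂ) y.2‖ ≤ Real.exp s₁
        rw [norm_div, Complex.norm_conj, div_le_iff₀ aq2]
        nlinarith
  refine ⟨key, ?_⟩
  have key1 : add1 s₁ s₂ x y ∈ Db s₁ b ↔ ‖x.2 * y.2‖ < Real.exp (-s₁) * ‖b‖ := by
    have habse1 : ‖Complex.exp (-(s₁ : ℂ) - Complex.I * (s₂ : ℂ))‖ = Real.exp (-s₁) := by
      rw [Complex.norm_exp]; norm_num
    have habse2 : ‖Complex.exp ((s₁ : ℂ) - Complex.I * (s₂ : ℂ))‖ = Real.exp s₁ := by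
      rw [Complex.norm_exp]; norm_num
    constructor
    · rintro ⟨-, h2, -⟩
      simp only [add1, norm_div, norm_mul, Complex.norm_conj, habse2] at h2
      rw [div_lt_iff₀ ap2, one_mul] at h2
      rw [norm_mul, hEneg, lt_inv_mul_iff₀ hE]
      nlinarith
    · intro h
      rw [norm_mul, hEneg, lt_inv_mul_iff₀ hE] at h
      refine ⟨?_, ?_, ?_⟩
      · show -(starRingEnd ℂ) (Complex.exp (-(s₁ : ℂ) - Complex.I * (s₂ : ℂ)) * x.1 * y.1) *
          (Complex.exp ((s₁ : ℂ) - Complex.I * (s₂ : ℂ)) * x.2 / (starRingEnd ℂ) y.1) = b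
        have hfx' : -(starRingEnd ℂ) x.1 * x.2 = b := hfx
        have hee : Complex.exp (-(s₁:ℂ) + Complex.I * (s₂:ℂ)) *
            Complex.exp ((s₁:ℂ) - Complex.I * (s₂:ℂ)) = 1 := by
          rw [← Complex.exp_add,
            show (-(s₁:ℂ) + Complex.I * (s₂:ℂ)) + ((s₁:ℂ) - Complex.I * (s₂:ℂ)) = 0 by ring,
            Complex.exp_zero]
        rw [map_mul, map_mul, ← Complex.exp_conj]
        have hc : (starRingEnd ℂ) (-(s₁:ℂ) - Complex.I * (s₂:ℂ)) = -(s₁:ℂ) + Complex.I * (s₂:ℂ) := by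
          simp only [map_sub, map_neg, map_mul, Complex.conj_ofReal, Complex.conj_I]; ring
        rw [hc]
        field_simp
        linear_combination (-(starRingEnd ℂ) x.1 * x.2) * hee + hfx'
      · show ‖Complex.exp ((s₁ : ℂ) - Complex.I * (s₂ : ℂ)) * x.2 / (starRingEnd ℂ) y.1‖ < 1
        rw [norm_div, norm_mul, Complex.norm_conj, habse2, div_lt_iff₀ ap2, one_mul]
        nlinarith
      · show ‖Complex.exp (-(s₁ : ℂ) - Complex.I * (s₂ : ℂ)) * x.1 * y.1‖ ≤ Real.exp s₁
        rw [norm_mul, norm_mul, habse1, hEneg, mul_assoc, inv_mul_le_iff₀ hE]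
        nlinarith
  rw [key, key1]
  rcases lt_or_ge (‖x.2 * y.2‖) (Real.exp (-s₁) * ‖b‖) with h | h
  · exact Or.inl ⟨h, not_le.mpr h⟩
  · exact Or.inr ⟨h, not_lt.mpr h⟩
end

section
/- Fix real numbers s₁, s₂. Let G = {(p,0) ∈ ℂ² : 0 < |p| ≤ e^{s₁}} ∪ {(0,q) ∈ ℂ² : 0 < |q| < 1}, the regular part of the singular fiber of the model focus-focus neighborhood, and define the addition ⊞ on G by: (p₁,0) ⊞ (p₂,0) = (e^{−s₁−is₂}·p₁p₂, 0); (0,q₁) ⊞ (0,q₂) = (0, q₁q₂); (p,0) ⊞ (0,q) = (0,q) ⊞ (p,0) = (p/conj(q), 0) if |p/q| ≤ e^{s₁}, and = (0, e^{s₁−is₂}·q/conj(p)) if |p/q| > e^{s₁}. Define φ : ℂ \ {0} → ℂ² by φ(z) = (z·e^{s₁+is₂}, 0) if |z| ≤ 1 and φ(z) = (0, 1/conj(z)) if |z| > 1. Then φ is a bijection from ℂ \ {0} onto G, ⊞ maps G × G into G, and φ(z·w) = φ(z) ⊞ φ(w) for all z, w ∈ ℂ \ {0}; in particular (G, ⊞)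 is an abelian group isomorphic to (ℂ*, ×). -/
/-- The mixed-type addition `(p,0) ⊞ (0,q)`: equal to `(p/conj(q), 0)` if
`|p/q| ≤ e^{s₁}`, and to `(0, e^{s₁−is₂}·q/conj(p))` if `|p/q| > e^{s₁}`. -/
noncomputable def mixed (s₁ s₂ : ℝ) (p q : ℂ) : ℂ × ℂ :=
  if ‖p / q‖ ≤ Real.exp s₁ then (p / (starRingEnd ℂ) q, 0)
  else (0, Complex.exp ((s₁ : ℂ) - Complex.I * (s₂ : ℂ)) * q / (starRingEnd ℂ) p)

/-- The addition `⊞` on the regular part of the singular fiber: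
`(p₁,0) ⊞ (p₂,0) = (e^{−s₁−is₂}·p₁p₂, 0)`, `(0,q₁) ⊞ (0,q₂) = (0, q₁q₂)`, and the
mixed cases are given by `mixed`. -/
noncomputable def addG (s₁ s₂ : ℝ) (x y : ℂ × ℂ) : ℂ × ℂ :=
  if x.2 = 0 then
    if y.2 = 0 then (Complex.exp (-(s₁ : ℂ) - Complex.I * (s₂ : ℂ)) * x.1 * y.1, 0)
    else mixed s₁ s₂ x.1 y.2
  else
    if y.2 = 0 then mixed s₁ s₂ y.1 x.2
    else (0, x.2 * y.2)

/-- The regular part of the singular fiber: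
`G = {(p,0) : 0 < |p| ≤ e^{s₁}} ∪ {(0,q) : 0 < |q| < 1}`. -/
noncomputable def G (s₁ : ℝ) : Set (ℂ × ℂ) :=
  {x | x.2 = 0 ∧ 0 < ‖x.1‖ ∧ ‖x.1‖ ≤ Real.exp s₁} ∪
  {x | x.1 = 0 ∧ 0 < ‖x.2‖ ∧ ‖x.2‖ < 1}

/-- The identification `φ : ℂ* → G`: `φ(z) = (z·e^{s₁+is₂}, 0)` if `|z| ≤ 1`,
and `φ(z) = (0, 1/conj(z))` if `|z| > 1`. -/
noncomputable def φG (s₁ s₂ : ℝ) (z : ℂ) : ℂ × ℂ :=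
  if ‖z‖ ≤ 1 then (z * Complex.exp ((s₁ : ℂ) + Complex.I * (s₂ : ℂ)), 0)
  else (0, 1 / (starRingEnd ℂ) z)

private lemma absE (s₁ s₂ : ℝ) :
    ‖Complex.exp ((s₁ : ℂ) + Complex.I * (s₂ : ℂ))‖ = Real.exp s₁ := by
  rw [Complex.norm_exp]; congr 1; simp

private lemma conjE (s₁ s₂ : ℝ) :
    (starRingEnd ℂ) (Complex.exp ((s₁ : ℂ) + Complex.I * (s₂ : ℂ)))
      = Complex.exp ((s₁ : ℂ) - Complex.I * (s₂ : ℂ)) := by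
  rw [← Complex.exp_conj]
  congr 1
  simp [map_add, map_mul, Complex.conj_I, Complex.conj_ofReal]
  ring

private lemma φG_le (s₁ s₂ : ℝ) {z : ℂ} (h : ‖z‖ ≤ 1) :
    φG s₁ s₂ z = (z * Complex.exp ((s₁ : ℂ) + Complex.I * (s₂ : ℂ)), 0) := by
  rw [φG, if_pos h]

private lemma φG_gt (s₁ s₂ : ℝ) {z : ℂ} (h : ¬ ‖z‖ ≤ 1) :
    φG s₁ s₂ z = (0, 1 / (starRingEnd ℂ) z) := by
  rw [φG, if_neg h]

private lemma addG_tt (s₁ s₂ : ℝ) (p p' : ℂ) :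
    addG s₁ s₂ (p, 0) (p', 0)
      = (Complex.exp (-(s₁ : ℂ) - Complex.I * (s₂ : ℂ)) * p * p', 0) := by
  simp [addG]

private lemma addG_tb (s₁ s₂ : ℝ) (p q : ℂ) (hq : q ≠ 0) :
    addG s₁ s₂ (p, 0) (0, q) = mixed s₁ s₂ p q := by
  simp [addG, hq]

private lemma addG_bt (s₁ s₂ : ℝ) (p q : ℂ) (hq : q ≠ 0) :
    addG s₁ s₂ (0, q) (p, 0) = mixed s₁ s₂ p q := by
  simp [addG, hq]

private lemma addG_bb (s₁ s₂ : ℝ) (q q' : ℂ) (hq : q ≠ 0) (hq' : q' ≠ 0) :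
    addG s₁ s₂ (0, q) (0, q') = (0, q * q') := by
  simp [addG, hq, hq']

private lemma mixedCase (s₁ s₂ : ℝ) (z w : ℂ) (hz : z ≠ 0) (hw : w ≠ 0)
    (hz1 : ‖z‖ ≤ 1) (hw1 : ¬ ‖w‖ ≤ 1) :
    φG s₁ s₂ (z * w) =
      mixed s₁ s₂ (z * Complex.exp ((s₁ : ℂ) + Complex.I * (s₂ : ℂ)))
        (1 / (starRingEnd ℂ) w) := by
  have hE0 : Complex.exp ((s₁ : ℂ) + Complex.I * (s₂ : ℂ)) ≠ 0 := Complex.exp_ne_zero _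
  have hcw : (starRingEnd ℂ) w ≠ 0 := by simpa using hw
  have hcz : (starRingEnd ℂ) z ≠ 0 := by simpa using hz
  have habs : ‖(z * Complex.exp ((s₁ : ℂ) + Complex.I * (s₂ : ℂ))) /
      (1 / (starRingEnd ℂ) w)‖
      = ‖z‖ * ‖w‖ * Real.exp s₁ := by
    rw [norm_div, norm_mul, norm_div]
    simp [absE s₁ s₂, Complex.norm_conj]
    ring
  have hexpPos : (0 : ℝ) < Real.exp s₁ := Real.exp_pos _
  by_cases hzw : ‖z * w‖ ≤ 1
  · have hcond : ‖(z * Complex.exp ((s₁ : ℂ) + Complex.I * (s₂ : ℂ))) /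
        (1 / (starRingEnd ℂ) w)‖ ≤ Real.exp s₁ := by
      rw [habs]
      have : ‖z‖ * ‖w‖ ≤ 1 := by rwa [norm_mul] at hzw
      nlinarith
    rw [mixed, if_pos hcond, φG_le s₁ s₂ hzw]
    refine Prod.ext ?_ rfl
    simp only [map_div₀, map_one, Complex.conj_conj]
    field_simp
  · have hcond : ¬ ‖(z * Complex.exp ((s₁ : ℂ) + Complex.I * (s₂ : ℂ))) /
        (1 / (starRingEnd ℂ) w)‖ ≤ Real.exp s₁ := by
      rw [habs]
      have h1 : ¬ ‖z‖ * ‖w‖ ≤ 1 := by rwa [norm_mul] at hzw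
      push_neg at h1 ⊢
      nlinarith
    rw [mixed, if_neg hcond, φG_gt s₁ s₂ hzw]
    refine Prod.ext rfl ?_
    have hE'0 : Complex.exp ((s₁ : ℂ) - Complex.I * (s₂ : ℂ)) ≠ 0 := Complex.exp_ne_zero _
    simp only [map_mul, map_one, map_div₀, conjE s₁ s₂, Complex.conj_conj]
    field_simp

private lemma homG (s₁ s₂ : ℝ) (z w : ℂ) (hz : z ≠ 0) (hw : w ≠ 0) :
    φG s₁ s₂ (z * w) = addG s₁ s₂ (φG s₁ s₂ z) (φG s₁ s₂ w) := by
  have hE0 : Complex.exp ((s₁ : ℂ) + Complex.I * (s₂ : ℂ)) ≠ 0 := Complex.exp_ne_zero _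
  have hcz : (starRingEnd ℂ) z ≠ 0 := by simpa using hz
  have hcw : (starRingEnd ℂ) w ≠ 0 := by simpa using hw
  by_cases hz1 : ‖z‖ ≤ 1 <;> by_cases hw1 : ‖w‖ ≤ 1
  · -- both small
    have hzw : ‖z * w‖ ≤ 1 := by
      rw [norm_mul]
      exact mul_le_one₀ hz1 (norm_nonneg w) hw1
    rw [φG_le s₁ s₂ hz1, φG_le s₁ s₂ hw1, addG_tt, φG_le s₁ s₂ hzw]
    refine Prod.ext ?_ rfl
    have h1 : Complex.exp (-(s₁ : ℂ) - Complex.I * (s₂ : ℂ)) *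
        Complex.exp ((s₁ : ℂ) + Complex.I * (s₂ : ℂ)) = 1 := by
      rw [← Complex.exp_add,
        show -(s₁ : ℂ) - Complex.I * (s₂ : ℂ) + ((s₁ : ℂ) + Complex.I * (s₂ : ℂ)) = 0 by ring,
        Complex.exp_zero]
    simp only
    linear_combination (-(z * w * Complex.exp ((s₁ : ℂ) + Complex.I * (s₂ : ℂ)))) * h1
  · -- z small, w big
    rw [φG_le s₁ s₂ hz1, φG_gt s₁ s₂ hw1, addG_tb _ _ _ _ (by simpa using hcw)]
    exact mixedCase s₁ s₂ z w hz hw hz1 hw1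
  · -- z big, w small
    rw [φG_gt s₁ s₂ hz1, φG_le s₁ s₂ hw1, addG_bt _ _ _ _ (by simpa using hcz)]
    rw [mul_comm z w]
    exact mixedCase s₁ s₂ w z hw hz hw1 hz1
  · -- both big
    have hzw : ¬ ‖z * w‖ ≤ 1 := by
      rw [norm_mul]
      push_neg at hz1 hw1 ⊢
      nlinarith [norm_nonneg z]
    rw [φG_gt s₁ s₂ hz1, φG_gt s₁ s₂ hw1,
      addG_bb _ _ _ _ (by simpa using hcz) (by simpa using hcw), φG_gt s₁ s₂ hzw]
    refine Prod.ext rfl ?_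
    simp only [map_mul]
    field_simp

/-- `φ` is a bijection from `ℂ \ {0}` onto `G`, `⊞` maps `G × G` into `G`, and
`φ(z·w) = φ(z) ⊞ φ(w)`; in particular `(G, ⊞)` is an abelian group isomorphic to
`(ℂ*, ×)`. -/
theorem stmt_12 (s₁ s₂ : ℝ) :
    Set.BijOn (φG s₁ s₂) {z : ℂ | z ≠ 0} (G s₁) ∧
    (∀ x ∈ G s₁, ∀ y ∈ G s₁, addG s₁ s₂ x y ∈ G s₁) ∧
    (∀ z w : ℂ, z ≠ 0 → w ≠ 0 → φG s₁ s₂ (z * w) = addG s₁ s₂ (φG s₁ s₂ z) (φG s₁ s₂ w)) := by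
  set E := Complex.exp ((s₁ : ℂ) + Complex.I * (s₂ : ℂ)) with hEdef
  have hE0 : E ≠ 0 := Complex.exp_ne_zero _
  have hexpPos : (0 : ℝ) < Real.exp s₁ := Real.exp_pos _
  have hmaps : Set.MapsTo (φG s₁ s₂) {z : ℂ | z ≠ 0} (G s₁) := by
    intro z hz
    simp only [Set.mem_setOf_eq] at hz
    have hz0 : 0 < ‖z‖ := by simpa [norm_pos_iff] using hz
    by_cases hz1 : ‖z‖ ≤ 1
    · left
      constructor
      · simp [φG, if_pos hz1]
      constructor
      · simp only [φG, if_pos hz1]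
        rw [norm_mul, absE s₁ s₂]
        positivity
      · simp only [φG, if_pos hz1]
        rw [norm_mul, absE s₁ s₂]
        nlinarith
    · right
      push_neg at hz1
      constructor
      · simp [φG, if_neg (not_le.mpr hz1)]
      constructor
      · simp only [φG, if_neg (not_le.mpr hz1)]
        rw [norm_div, norm_one, Complex.norm_conj]
        positivity
      · simp only [φG, if_neg (not_le.mpr hz1)]
        rw [norm_div, norm_one, Complex.norm_conj]
        rw [div_lt_one (by positivity)]
        linarith
  have hsurj : Set.SurjOn (φG s₁ s₂) {z : ℂ | z ≠ 0} (G s₁) := by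
    intro x hx
    rcases hx with ⟨h2, h1pos, h1le⟩ | ⟨h1, h2pos, h2lt⟩
    · refine ⟨x.1 * E⁻¹, ?_, ?_⟩
      · have : x.1 ≠ 0 := by
          intro h; rw [h] at h1pos; simp at h1pos
        simp [this, hE0]
      · have habs : ‖x.1 * E⁻¹‖ ≤ 1 := by
          rw [norm_mul, norm_inv, absE s₁ s₂]
          rw [mul_inv_le_iff₀ hexpPos, one_mul]
          exact h1le
        rw [φG, if_pos habs]
        refine Prod.ext ?_ (by simp [h2])
        simp only
        field_simp
        rfl
    · refine ⟨1 / (starRingEnd ℂ) x.2, ?_, ?_⟩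
      · have : x.2 ≠ 0 := by
          intro h; rw [h] at h2pos; simp at h2pos
        simp [this]
      · have hc2 : (starRingEnd ℂ) x.2 ≠ 0 := by
          intro h
          rw [map_eq_zero] at h
          rw [h] at h2pos; simp at h2pos
        have habs : ¬ ‖1 / (starRingEnd ℂ) x.2‖ ≤ 1 := by
          rw [norm_div, norm_one, Complex.norm_conj, not_le]
          rw [lt_div_iff₀ h2pos, one_mul]
          exact h2lt
        rw [φG, if_neg habs]
        refine Prod.ext (by simp [h1]) ?_
        simp only
        rw [map_div₀, map_one, Complex.conj_conj]
        field_simp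
  have hinj : Set.InjOn (φG s₁ s₂) {z : ℂ | z ≠ 0} := by
    intro z hz w hw h
    simp only [Set.mem_setOf_eq] at hz hw
    by_cases hz1 : ‖z‖ ≤ 1 <;> by_cases hw1 : ‖w‖ ≤ 1
    · rw [φG, if_pos hz1, φG, if_pos hw1] at h
      have := congrArg Prod.fst h
      simp only at this
      exact mul_right_cancel₀ hE0 this
    · rw [φG, if_pos hz1, φG, if_neg hw1] at h
      have := congrArg Prod.fst h
      simp only at this
      exact absurd this (by simp [hz, hE0])
    · rw [φG, if_neg hz1, φG, if_pos hw1] at h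
      have := congrArg Prod.fst h
      simp only at this
      exact absurd this.symm (by simp [hw, hE0])
    · rw [φG, if_neg hz1, φG, if_neg hw1] at h
      have := congrArg Prod.snd h
      simp only at this
      have hcz : (starRingEnd ℂ) z ≠ 0 := by simpa using hz
      have hcw : (starRingEnd ℂ) w ≠ 0 := by simpa using hw
      have : (starRingEnd ℂ) z = (starRingEnd ℂ) w := by
        field_simp at this
        exact this.symm
      exact (starRingEnd ℂ).injective this
  refine ⟨⟨hmaps, hinj, hsurj⟩, ?_, fun z w hz hw => homG s₁ s₂ z w hz hw⟩
  intro x hx y hy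
  obtain ⟨z, hz, hzx⟩ := hsurj hx
  obtain ⟨w, hw, hwy⟩ := hsurj hy
  rw [← hzx, ← hwy, ← homG s₁ s₂ z w hz hw]
  exact hmaps (by simp only [Set.mem_setOf_eq] at hz hw ⊢; exact mul_ne_zero hz hw)
end

section
/- The maps F₁, F₂ : ℂ³ → ℂ⁶ defined by F₁(a,b,c) = (conj(a), −bc, conj(b), −ac, conj(a)·conj(b), −c) and F₂(a,b,c) = (−conj(b)·conj(c), a, −conj(a)·conj(c), b, −conj(c), ab) are both injective, infinitely real-differentiable, and have injective real Fréchet derivative at every point of ℂ³; i.e., each is an injective immersion. -/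
/-- `F₁(a,b,c) = (conj(a), −bc, conj(b), −ac, conj(a)·conj(b), −c)`, the chart of
the closure of the addition graph using `σ₁` as zero section (for `S ≡ 0`). -/
noncomputable def F₁ : ℂ × ℂ × ℂ → (ℂ × ℂ) × (ℂ × ℂ) × (ℂ × ℂ) := fun x =>
  (((starRingEnd ℂ) x.1, -(x.2.1 * x.2.2)),
   ((starRingEnd ℂ) x.2.1, -(x.1 * x.2.2)),
   ((starRingEnd ℂ) x.1 * (starRingEnd ℂ) x.2.1, -x.2.2))

/-- `F₂(a,b,c) = (−conj(b)·conj(c), a, −conj(a)·conj(c), b, −conj(c), ab)`, the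
chart using `σ₂` as zero section (for `S ≡ 0`). -/
noncomputable def F₂ : ℂ × ℂ × ℂ → (ℂ × ℂ) × (ℂ × ℂ) × (ℂ × ℂ) := fun x =>
  ((-((starRingEnd ℂ) x.2.1 * (starRingEnd ℂ) x.2.2), x.1),
   (-((starRingEnd ℂ) x.1 * (starRingEnd ℂ) x.2.2), x.2.1),
   (-(starRingEnd ℂ) x.2.2, x.1 * x.2.1))

noncomputable def conjCLM : ℂ →L[ℝ] ℂ := Complex.conjCLE.toContinuousLinearMap

noncomputable def T₁ : ℂ × ℂ × ℂ →L[ℝ] ℂ × ℂ × ℂ :=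
  (conjCLM.comp (ContinuousLinearMap.fst ℝ ℂ (ℂ × ℂ))).prod
    (((conjCLM.comp (ContinuousLinearMap.fst ℝ ℂ ℂ)).comp (ContinuousLinearMap.snd ℝ ℂ (ℂ × ℂ))).prod
     ((-(ContinuousLinearMap.snd ℝ ℂ ℂ)).comp (ContinuousLinearMap.snd ℝ ℂ (ℂ × ℂ))))

noncomputable def T₂ : ℂ × ℂ × ℂ →L[ℝ] ℂ × ℂ × ℂ :=
  (ContinuousLinearMap.fst ℝ ℂ (ℂ × ℂ)).prod
    (((ContinuousLinearMap.fst ℝ ℂ ℂ).comp (ContinuousLinearMap.snd ℝ ℂ (ℂ × ℂ))).prod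
     ((-(conjCLM.comp (ContinuousLinearMap.snd ℝ ℂ ℂ))).comp (ContinuousLinearMap.snd ℝ ℂ (ℂ × ℂ))))

noncomputable def π₁ : (ℂ × ℂ) × (ℂ × ℂ) × (ℂ × ℂ) →L[ℝ] ℂ × ℂ × ℂ :=
  ((ContinuousLinearMap.fst ℝ ℂ ℂ).comp (ContinuousLinearMap.fst ℝ (ℂ × ℂ) ((ℂ × ℂ) × (ℂ × ℂ)))).prod
    ((((ContinuousLinearMap.fst ℝ ℂ ℂ).comp (ContinuousLinearMap.fst ℝ (ℂ × ℂ) (ℂ × ℂ))).comp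
        (ContinuousLinearMap.snd ℝ (ℂ × ℂ) ((ℂ × ℂ) × (ℂ × ℂ)))).prod
     (((ContinuousLinearMap.snd ℝ ℂ ℂ).comp (ContinuousLinearMap.snd ℝ (ℂ × ℂ) (ℂ × ℂ))).comp
        (ContinuousLinearMap.snd ℝ (ℂ × ℂ) ((ℂ × ℂ) × (ℂ × ℂ)))))

noncomputable def π₂ : (ℂ × ℂ) × (ℂ × ℂ) × (ℂ × ℂ) →L[ℝ] ℂ × ℂ × ℂ :=
  ((ContinuousLinearMap.snd ℝ ℂ ℂ).comp (ContinuousLinearMap.fst ℝ (ℂ × ℂ) ((ℂ × ℂ) × (ℂ × ℂ)))).prod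
    ((((ContinuousLinearMap.snd ℝ ℂ ℂ).comp (ContinuousLinearMap.fst ℝ (ℂ × ℂ) (ℂ × ℂ))).comp
        (ContinuousLinearMap.snd ℝ (ℂ × ℂ) ((ℂ × ℂ) × (ℂ × ℂ)))).prod
     (((ContinuousLinearMap.fst ℝ ℂ ℂ).comp (ContinuousLinearMap.snd ℝ (ℂ × ℂ) (ℂ × ℂ))).comp
        (ContinuousLinearMap.snd ℝ (ℂ × ℂ) ((ℂ × ℂ) × (ℂ × ℂ)))))

lemma conj_contDiff : ContDiff ℝ (⊤ : ℕ∞) (fun z : ℂ => (starRingEnd ℂ) z) :=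
  Complex.conjCLE.toContinuousLinearMap.contDiff

lemma hF₁ : ContDiff ℝ (⊤ : ℕ∞) F₁ := by
  unfold F₁
  refine ContDiff.prodMk (ContDiff.prodMk ?_ ?_) (ContDiff.prodMk (ContDiff.prodMk ?_ ?_) (ContDiff.prodMk ?_ ?_))
  · exact conj_contDiff.comp contDiff_fst
  · exact ((contDiff_fst.comp contDiff_snd).mul (contDiff_snd.comp contDiff_snd)).neg
  · exact conj_contDiff.comp (contDiff_fst.comp contDiff_snd)
  · exact (contDiff_fst.mul (contDiff_snd.comp contDiff_snd)).neg
  · exact (conj_contDiff.comp contDiff_fst).mul (conj_contDiff.comp (contDiff_fst.comp contDiff_snd))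
  · exact (contDiff_snd.comp contDiff_snd).neg

lemma hF₂ : ContDiff ℝ (⊤ : ℕ∞) F₂ := by
  unfold F₂
  refine ContDiff.prodMk (ContDiff.prodMk ?_ ?_) (ContDiff.prodMk (ContDiff.prodMk ?_ ?_) (ContDiff.prodMk ?_ ?_))
  · exact ((conj_contDiff.comp (contDiff_fst.comp contDiff_snd)).mul
      (conj_contDiff.comp (contDiff_snd.comp contDiff_snd))).neg
  · exact contDiff_fst
  · exact ((conj_contDiff.comp contDiff_fst).mul
      (conj_contDiff.comp (contDiff_snd.comp contDiff_snd))).neg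
  · exact contDiff_fst.comp contDiff_snd
  · exact (conj_contDiff.comp (contDiff_snd.comp contDiff_snd)).neg
  · exact contDiff_fst.mul (contDiff_fst.comp contDiff_snd)

lemma hT₁inj : Function.Injective T₁ := by
  intro u v h
  simp [T₁, conjCLM, Prod.ext_iff] at h
  obtain ⟨h1, h2, h3⟩ := h
  exact Prod.ext (star_injective h1) (Prod.ext (star_injective h2) h3)

lemma hT₂inj : Function.Injective T₂ := by
  intro u v h
  simp [T₂, conjCLM, Prod.ext_iff] at h
  obtain ⟨h1, h2, h3⟩ := h
  exact Prod.ext h1 (Prod.ext h2 (star_injective h3))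

lemma comp₁ (x : ℂ × ℂ × ℂ) : π₁.comp (fderiv ℝ F₁ x) = T₁ := by
  have h1 : HasFDerivAt (⇑π₁ ∘ F₁) (π₁.comp (fderiv ℝ F₁ x)) x :=
    π₁.hasFDerivAt.comp x (hF₁.differentiable (by simp) x).hasFDerivAt
  have h2 : (⇑π₁ ∘ F₁) = ⇑T₁ := by
    funext y
    simp [π₁, T₁, F₁, conjCLM, Function.comp]
  rw [h2] at h1
  exact h1.unique T₁.hasFDerivAt

lemma comp₂ (x : ℂ × ℂ × ℂ) : π₂.comp (fderiv ℝ F₂ x) = T₂ := by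
  have h1 : HasFDerivAt (⇑π₂ ∘ F₂) (π₂.comp (fderiv ℝ F₂ x)) x :=
    π₂.hasFDerivAt.comp x (hF₂.differentiable (by simp) x).hasFDerivAt
  have h2 : (⇑π₂ ∘ F₂) = ⇑T₂ := by
    funext y
    simp [π₂, T₂, F₂, conjCLM, Function.comp]
  rw [h2] at h1
  exact h1.unique T₂.hasFDerivAt


/-- `F₁` and `F₂` are injective, infinitely real-differentiable, and have
injective real Fréchet derivative at every point: each is an injective immersion. -/
theorem stmt_13 :
    Function.Injective F₁ ∧ ContDiff ℝ (⊤ : ℕ∞) F₁ ∧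
      (∀ x : ℂ × ℂ × ℂ, Function.Injective (fderiv ℝ F₁ x)) ∧
    Function.Injective F₂ ∧ ContDiff ℝ (⊤ : ℕ∞) F₂ ∧
      (∀ x : ℂ × ℂ × ℂ, Function.Injective (fderiv ℝ F₂ x)) := by
  refine ⟨?_, hF₁, ?_, ?_, hF₂, ?_⟩
  · intro u v h
    simp only [F₁, Prod.mk.injEq] at h
    exact Prod.ext (star_injective h.1.1)
      (Prod.ext (star_injective h.2.1.1) (neg_injective h.2.2.2))
  · intro x u v h
    have := congrArg π₁ h
    rw [← ContinuousLinearMap.comp_apply, ← ContinuousLinearMap.comp_apply, comp₁] at this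
    exact hT₁inj this
  · intro u v h
    simp only [F₂, Prod.mk.injEq] at h
    refine Prod.ext h.1.2 (Prod.ext h.2.1.2 ?_)
    have := star_injective (neg_injective h.2.2.1)
    exact this
  · intro x u v h
    have := congrArg π₂ h
    rw [← ContinuousLinearMap.comp_apply, ← ContinuousLinearMap.comp_apply, comp₂] at this
    exact hT₂inj this
end

section
/- The maps F₁ and F₂ are isotropic for the form ω̃ = (−ω)⊕(−ω)⊕ω: for every x ∈ ℂ³ and all u, v ∈ ℂ³, ω̃(DF₁(x)u, DF₁(x)v) = 0 and ω̃(DF₂(x)u, DF₂(x)v) = 0, where DFᵢ(x) denotes the real Fréchet derivative at x. (Since F₁, F₂ are immersions of a real 6-dimensional manifold into the 12-dimensional ℂ⁶, this says that the closure of the addition graph of the model focus-focus neighborhood is Lagrangian in each chart.) -/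
/-- The form `ω̃ = (−ω) ⊕ (−ω) ⊕ ω` on `ℂ⁶ = ℂ² × ℂ² × ℂ²`. -/
noncomputable def ωtilde :
    (ℂ × ℂ) × (ℂ × ℂ) × (ℂ × ℂ) → (ℂ × ℂ) × (ℂ × ℂ) × (ℂ × ℂ) → ℝ := fun x y =>
  -ω x.1 y.1 - ω x.2.1 y.2.1 + ω x.2.2 y.2.2

lemma fderiv_F₁ (x u : ℂ × ℂ × ℂ) :
    fderiv ℝ F₁ x u =
      (((starRingEnd ℂ) u.1, -(u.2.1 * x.2.2 + x.2.1 * u.2.2)),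
       ((starRingEnd ℂ) u.2.1, -(u.1 * x.2.2 + x.1 * u.2.2)),
       ((starRingEnd ℂ) u.1 * (starRingEnd ℂ) x.2.1
          + (starRingEnd ℂ) x.1 * (starRingEnd ℂ) u.2.1, -u.2.2)) := by
  have ha : HasFDerivAt (fun x : ℂ × ℂ × ℂ => x.1)
      (ContinuousLinearMap.fst ℝ ℂ (ℂ × ℂ)) x := hasFDerivAt_fst
  have hb : HasFDerivAt (fun x : ℂ × ℂ × ℂ => x.2.1)
      ((ContinuousLinearMap.fst ℝ ℂ ℂ).comp (ContinuousLinearMap.snd ℝ ℂ (ℂ × ℂ))) x :=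
    hasFDerivAt_fst.comp x hasFDerivAt_snd
  have hc : HasFDerivAt (fun x : ℂ × ℂ × ℂ => x.2.2)
      ((ContinuousLinearMap.snd ℝ ℂ ℂ).comp (ContinuousLinearMap.snd ℝ ℂ (ℂ × ℂ))) x :=
    hasFDerivAt_snd.comp x hasFDerivAt_snd
  have hconj : ∀ z : ℂ, HasFDerivAt (starRingEnd ℂ)
      (Complex.conjCLE.toContinuousLinearMap) z := fun z =>
    Complex.conjCLE.hasFDerivAt
  have h1 := HasFDerivAt.prodMk (HasFDerivAt.comp x (hconj x.1) ha) (HasFDerivAt.neg (HasFDerivAt.mul hb hc))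
  have h2 := HasFDerivAt.prodMk (HasFDerivAt.comp x (hconj x.2.1) hb) (HasFDerivAt.neg (HasFDerivAt.mul ha hc))
  have h3 := HasFDerivAt.prodMk (HasFDerivAt.mul (HasFDerivAt.comp x (hconj x.1) ha) (HasFDerivAt.comp x (hconj x.2.1) hb)) (HasFDerivAt.neg hc)
  have H := HasFDerivAt.fderiv (HasFDerivAt.prodMk h1 (HasFDerivAt.prodMk h2 h3))
  simp only [Function.comp_def, Pi.mul_apply, Pi.neg_apply] at H
  rw [show fderiv ℝ F₁ x = fderiv ℝ (fun x : ℂ × ℂ × ℂ =>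
    (((starRingEnd ℂ) x.1, -(x.2.1 * x.2.2)),
     ((starRingEnd ℂ) x.2.1, -(x.1 * x.2.2)),
     ((starRingEnd ℂ) x.1 * (starRingEnd ℂ) x.2.1, -x.2.2))) x from rfl, H]
  simp [ContinuousLinearMap.smul_apply, smul_eq_mul, mul_comm]
  exact ⟨by ring, by ring, by ring⟩

lemma fderiv_F₂ (x u : ℂ × ℂ × ℂ) :
    fderiv ℝ F₂ x u =
      ((-((starRingEnd ℂ) u.2.1 * (starRingEnd ℂ) x.2.2
          + (starRingEnd ℂ) x.2.1 * (starRingEnd ℂ) u.2.2), u.1),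
       (-((starRingEnd ℂ) u.1 * (starRingEnd ℂ) x.2.2
          + (starRingEnd ℂ) x.1 * (starRingEnd ℂ) u.2.2), u.2.1),
       (-(starRingEnd ℂ) u.2.2, u.1 * x.2.1 + x.1 * u.2.1)) := by
  have ha : HasFDerivAt (fun x : ℂ × ℂ × ℂ => x.1)
      (ContinuousLinearMap.fst ℝ ℂ (ℂ × ℂ)) x := hasFDerivAt_fst
  have hb : HasFDerivAt (fun x : ℂ × ℂ × ℂ => x.2.1)
      ((ContinuousLinearMap.fst ℝ ℂ ℂ).comp (ContinuousLinearMap.snd ℝ ℂ (ℂ × ℂ))) x :=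
    hasFDerivAt_fst.comp x hasFDerivAt_snd
  have hc : HasFDerivAt (fun x : ℂ × ℂ × ℂ => x.2.2)
      ((ContinuousLinearMap.snd ℝ ℂ ℂ).comp (ContinuousLinearMap.snd ℝ ℂ (ℂ × ℂ))) x :=
    hasFDerivAt_snd.comp x hasFDerivAt_snd
  have hconj : ∀ z : ℂ, HasFDerivAt (starRingEnd ℂ)
      (Complex.conjCLE.toContinuousLinearMap) z := fun z =>
    Complex.conjCLE.hasFDerivAt
  have h1 := HasFDerivAt.prodMk (HasFDerivAt.neg (HasFDerivAt.mul (HasFDerivAt.comp x (hconj x.2.1) hb) (HasFDerivAt.comp x (hconj x.2.2) hc))) ha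
  have h2 := HasFDerivAt.prodMk (HasFDerivAt.neg (HasFDerivAt.mul (HasFDerivAt.comp x (hconj x.1) ha) (HasFDerivAt.comp x (hconj x.2.2) hc))) hb
  have h3 := HasFDerivAt.prodMk (HasFDerivAt.neg (HasFDerivAt.comp x (hconj x.2.2) hc)) (HasFDerivAt.mul ha hb)
  have H := HasFDerivAt.fderiv (HasFDerivAt.prodMk h1 (HasFDerivAt.prodMk h2 h3))
  simp only [Function.comp_def, Pi.mul_apply, Pi.neg_apply] at H
  rw [show fderiv ℝ F₂ x = fderiv ℝ (fun x : ℂ × ℂ × ℂ =>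
    ((-((starRingEnd ℂ) x.2.1 * (starRingEnd ℂ) x.2.2), x.1),
     (-((starRingEnd ℂ) x.1 * (starRingEnd ℂ) x.2.2), x.2.1),
     (-(starRingEnd ℂ) x.2.2, x.1 * x.2.1))) x from rfl, H]
  simp [ContinuousLinearMap.smul_apply, smul_eq_mul, mul_comm]
  refine ⟨by ring, by ring, by ring⟩

/-- `F₁` and `F₂` are isotropic for `ω̃ = (−ω)⊕(−ω)⊕ω`: the pullback of `ω̃` by
each map vanishes identically. -/
theorem stmt_14 :
    ∀ (x u v : ℂ × ℂ × ℂ),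
      ωtilde (fderiv ℝ F₁ x u) (fderiv ℝ F₁ x v) = 0 ∧
      ωtilde (fderiv ℝ F₂ x u) (fderiv ℝ F₂ x v) = 0 := by
  intro x u v
  rw [fderiv_F₁ x u, fderiv_F₁ x v, fderiv_F₂ x u, fderiv_F₂ x v]
  constructor <;>
  · simp only [ωtilde, ω, Complex.sub_re, Complex.add_re, Complex.neg_re,
      Complex.mul_re, Complex.conj_re, Complex.conj_im, Complex.add_im,
      Complex.neg_im, Complex.mul_im]
    ring
end

section
/- If (a,b,c), (a',b',c') ∈ ℂ³ satisfy F₁(a,b,c) = F₂(a',b',c') and |abc| < 1, then a = b = c = 0 and a' = b' = c' = 0. In other words, the images of F₁ and F₂ (restricted to the domain |abc| < 1) meet only at the origin of ℂ⁶, which corresponds to the triple (s,s,s) at the singular point s; the closure of the addition graph has a unique double point there. -/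
/-- If `F₁(a,b,c) = F₂(a',b',c')` and `|abc| < 1`, then all six coordinates
vanish: the images of `F₁` and `F₂` meet only at the origin of `ℂ⁶`, the unique
double point `(s,s,s)` of the closure of the addition graph. -/
theorem stmt_15 (a b c a' b' c' : ℂ)
    (h : F₁ (a, b, c) = F₂ (a', b', c'))
    (habc : ‖a * b * c‖ < 1) :
    a = 0 ∧ b = 0 ∧ c = 0 ∧ a' = 0 ∧ b' = 0 ∧ c' = 0 := by
  simp only [F₁, F₂, Prod.mk.injEq] at h
  obtain ⟨⟨h1, h2⟩, ⟨h3, h4⟩, h5, h6⟩ := h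
  -- from h2, h4: a' = -(b*c), b' = -(a*c)
  have hc : c = 0 := by
    by_contra hc
    -- h6 : -c = a' * b' = (b*c)*(a*c) = a*b*c^2
    have : -c = a * b * c ^ 2 := by rw [h6, ← h2, ← h4]; ring
    have habc1 : a * b * c = -1 := by
      have h' : a * b * c * c = (-1) * c := by linear_combination -this
      exact mul_right_cancel₀ hc h'
    rw [habc1] at habc
    simp at habc
  subst hc
  have ha' : a' = 0 := by rw [← h2]; ring
  have hb' : b' = 0 := by rw [← h4]; ring
  subst ha'; subst hb'
  have ha : a = 0 := by
    have := h1
    simp at this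
    exact this
  have hb : b = 0 := by
    have := h3
    simp at this
    exact this
  subst ha; subst hb
  have hc' : c' = 0 := by
    have := h5
    simp at this
    exact this
  exact ⟨rfl, rfl, rfl, rfl, rfl, hc'⟩
end

section
/- The ranges of the real Fréchet derivatives of F₁ and F₂ at the origin together span all of ℂ⁶: range(DF₁(0,0,0)) + range(DF₂(0,0,0)) = ℂ⁶ as real subspaces (each range being a real 6-dimensional subspace of the real 12-dimensional space ℂ⁶). Hence the closure of the addition graph of the model focus-focus neighborhood has a transversal self-intersection at the triple (s,s,s) over the singular point s. -/
/- Auxiliary continuous linear maps: conjugation and the three coordinate projections. -/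
noncomputable def Cj : ℂ →L[ℝ] ℂ := Complex.conjCLE.toContinuousLinearMap
noncomputable def Pa : ℂ × ℂ × ℂ →L[ℝ] ℂ := ContinuousLinearMap.fst ℝ ℂ (ℂ × ℂ)
noncomputable def Pb : ℂ × ℂ × ℂ →L[ℝ] ℂ :=
  (ContinuousLinearMap.fst ℝ ℂ ℂ).comp (ContinuousLinearMap.snd ℝ ℂ (ℂ × ℂ))
noncomputable def Pc : ℂ × ℂ × ℂ →L[ℝ] ℂ :=
  (ContinuousLinearMap.snd ℝ ℂ ℂ).comp (ContinuousLinearMap.snd ℝ ℂ (ℂ × ℂ))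

/-- The real derivative of `F₁` at the origin: `(a,b,c) ↦ (conj a, 0, conj b, 0, 0, -c)`. -/
noncomputable def L₁ : ℂ × ℂ × ℂ →L[ℝ] (ℂ × ℂ) × (ℂ × ℂ) × (ℂ × ℂ) :=
  ((Cj.comp Pa).prod 0).prod (((Cj.comp Pb).prod 0).prod ((0 : ℂ × ℂ × ℂ →L[ℝ] ℂ).prod (-Pc)))

/-- The real derivative of `F₂` at the origin: `(a,b,c) ↦ (0, a, 0, b, -conj c, 0)`. -/
noncomputable def L₂ : ℂ × ℂ × ℂ →L[ℝ] (ℂ × ℂ) × (ℂ × ℂ) × (ℂ × ℂ) :=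
  ((0 : ℂ × ℂ × ℂ →L[ℝ] ℂ).prod Pa).prod
    (((0 : ℂ × ℂ × ℂ →L[ℝ] ℂ).prod Pb).prod ((-(Cj.comp Pc)).prod 0))

lemma ha : HasFDerivAt (fun x : ℂ × ℂ × ℂ => (starRingEnd ℂ) x.1) (Cj.comp Pa) 0 :=
  (Cj.comp Pa).hasFDerivAt
lemma hb : HasFDerivAt (fun x : ℂ × ℂ × ℂ => (starRingEnd ℂ) x.2.1) (Cj.comp Pb) 0 :=
  (Cj.comp Pb).hasFDerivAt
lemma hc : HasFDerivAt (fun x : ℂ × ℂ × ℂ => (starRingEnd ℂ) x.2.2) (Cj.comp Pc) 0 :=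
  (Cj.comp Pc).hasFDerivAt

lemma hbc : HasFDerivAt (fun x : ℂ × ℂ × ℂ => -(x.2.1 * x.2.2)) (0 : ℂ × ℂ × ℂ →L[ℝ] ℂ) 0 := by
  have := (Pb.hasFDerivAt (x := 0)).mul (Pc.hasFDerivAt (x := 0))
  have h := this.neg
  refine h.congr_fderiv ?_
  ext v <;> simp [Pb, Pc]

lemma hac : HasFDerivAt (fun x : ℂ × ℂ × ℂ => -(x.1 * x.2.2)) (0 : ℂ × ℂ × ℂ →L[ℝ] ℂ) 0 := by
  have := (Pa.hasFDerivAt (x := 0)).mul (Pc.hasFDerivAt (x := 0))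
  have h := this.neg
  refine h.congr_fderiv ?_
  ext v <;> simp [Pa, Pc]

lemma hab : HasFDerivAt
    (fun x : ℂ × ℂ × ℂ => (starRingEnd ℂ) x.1 * (starRingEnd ℂ) x.2.1)
    (0 : ℂ × ℂ × ℂ →L[ℝ] ℂ) 0 := by
  have h := ha.mul hb
  refine h.congr_fderiv ?_
  ext v <;> simp

lemma hF1 : HasFDerivAt F₁ L₁ 0 :=
  (ha.prodMk hbc).prodMk ((hb.prodMk hac).prodMk (hab.prodMk ((-Pc).hasFDerivAt)))

lemma hab2 : HasFDerivAt
    (fun x : ℂ × ℂ × ℂ => -((starRingEnd ℂ) x.2.1 * (starRingEnd ℂ) x.2.2))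
    (0 : ℂ × ℂ × ℂ →L[ℝ] ℂ) 0 := by
  have h := (hb.mul hc).neg
  refine h.congr_fderiv ?_
  ext v <;> simp

lemma hac2 : HasFDerivAt
    (fun x : ℂ × ℂ × ℂ => -((starRingEnd ℂ) x.1 * (starRingEnd ℂ) x.2.2))
    (0 : ℂ × ℂ × ℂ →L[ℝ] ℂ) 0 := by
  have h := (ha.mul hc).neg
  refine h.congr_fderiv ?_
  ext v <;> simp

lemma hmul2 : HasFDerivAt (fun x : ℂ × ℂ × ℂ => x.1 * x.2.1) (0 : ℂ × ℂ × ℂ →L[ℝ] ℂ) 0 := by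
  have h := (Pa.hasFDerivAt (x := 0)).mul (Pb.hasFDerivAt (x := 0))
  refine h.congr_fderiv ?_
  ext v <;> simp [Pa, Pb]

lemma hF2 : HasFDerivAt F₂ L₂ 0 :=
  (hab2.prodMk Pa.hasFDerivAt).prodMk
    ((hac2.prodMk Pb.hasFDerivAt).prodMk ((-(Cj.comp Pc)).hasFDerivAt.prodMk hmul2))

/-- The ranges of the real Fréchet derivatives of `F₁` and `F₂` at the origin
together span all of `ℂ⁶` (as real subspaces): the closure of the addition graph
has a transversal self-intersection at `(s,s,s)`. -/
theorem stmt_16 :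
    LinearMap.range ((fderiv ℝ F₁ 0 : (ℂ × ℂ × ℂ) →L[ℝ] (ℂ × ℂ) × (ℂ × ℂ) × (ℂ × ℂ)) :
        (ℂ × ℂ × ℂ) →ₗ[ℝ] (ℂ × ℂ) × (ℂ × ℂ) × (ℂ × ℂ)) ⊔
      LinearMap.range ((fderiv ℝ F₂ 0 : (ℂ × ℂ × ℂ) →L[ℝ] (ℂ × ℂ) × (ℂ × ℂ) × (ℂ × ℂ)) :
        (ℂ × ℂ × ℂ) →ₗ[ℝ] (ℂ × ℂ) × (ℂ × ℂ) × (ℂ × ℂ)) = ⊤ := by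
  rw [hF1.fderiv, hF2.fderiv, eq_top_iff]
  rintro ⟨⟨p, q⟩, ⟨r, s⟩, t, u⟩ -
  refine Submodule.mem_sup.2 ⟨L₁ ((starRingEnd ℂ) p, (starRingEnd ℂ) r, -u), ⟨_, rfl⟩,
    L₂ (q, s, -(starRingEnd ℂ) t), ⟨_, rfl⟩, ?_⟩
  simp [L₁, L₂, Cj, Pa, Pb, Pc, Prod.ext_iff]
end
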